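/- Let v̂ ∈ ℂ^d, ξ ∈ ℝ^d \ {0}, and let χ̂ ∈ ℂ^{d×d} be a diagonal matrix. For v̂_* = i((2π)^{-1}|ξ|^{-4}(ξ·χ̂ξ) − π^{-1}|ξ|^{-2}χ̂)ξ one has the exact identity |2π v̂_* ⊙ (iξ) − χ̂|² = |ξ|^{-4}|ξ · χ̂ξ|² + |χ̂|² − 2|ξ|^{-2}|χ̂ξ|². -/

import Mathlib

open BigOperators

set_option maxHeartbeats 1000000 in
private lemma sum_expand_aux {d : ℕ} (w f g χ : Fin d → ℂ) :
    ∑ i, ∑ j, ((f i * w j + w i * g j - (if i = j then χ i else 0)) *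
      ((starRingEnd ℂ) (f i) * (starRingEnd ℂ) (w j) + (starRingEnd ℂ) (w i) * (starRingEnd ℂ) (g j)
        - (if i = j then (starRingEnd ℂ) (χ i) else 0)))
  = (∑ i, f i * (starRingEnd ℂ) (f i)) * (∑ j, w j * (starRingEnd ℂ) (w j))
    + (∑ i, f i * (starRingEnd ℂ) (w i)) * (∑ j, w j * (starRingEnd ℂ) (g j))
    + (∑ i, w i * (starRingEnd ℂ) (f i)) * (∑ j, g j * (starRingEnd ℂ) (w j))
    + (∑ i, w i * (starRingEnd ℂ) (w i)) * (∑ j, g j * (starRingEnd ℂ) (g j))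
    - (∑ i, f i * w i * (starRingEnd ℂ) (χ i))
    - (∑ i, w i * g i * (starRingEnd ℂ) (χ i))
    - (∑ i, χ i * (starRingEnd ℂ) (f i) * (starRingEnd ℂ) (w i))
    - (∑ i, χ i * (starRingEnd ℂ) (w i) * (starRingEnd ℂ) (g i))
    + (∑ i, χ i * (starRingEnd ℂ) (χ i)) := by
  have h1 : ∀ i : Fin d, ∀ j : Fin d,
      ((f i * w j + w i * g j - (if i = j then χ i else 0)) *
      ((starRingEnd ℂ) (f i) * (starRingEnd ℂ) (w j) + (starRingEnd ℂ) (w i) * (starRingEnd ℂ) (g j)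
        - (if i = j then (starRingEnd ℂ) (χ i) else 0)))
    = (f i * (starRingEnd ℂ) (f i) * (w j * (starRingEnd ℂ) (w j))
      + f i * (starRingEnd ℂ) (w i) * (w j * (starRingEnd ℂ) (g j))
      + w i * (starRingEnd ℂ) (f i) * (g j * (starRingEnd ℂ) (w j))
      + w i * (starRingEnd ℂ) (w i) * (g j * (starRingEnd ℂ) (g j)))
      + (if i = j then
          (- (f j * w j * (starRingEnd ℂ) (χ j)) - w j * g j * (starRingEnd ℂ) (χ j)
           - χ j * (starRingEnd ℂ) (f j) * (starRingEnd ℂ) (w j)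
           - χ j * (starRingEnd ℂ) (w j) * (starRingEnd ℂ) (g j)
           + χ j * (starRingEnd ℂ) (χ j)) else 0) := by
    intro i j
    split_ifs with h
    · subst h; ring
    · ring
  simp only [h1, Finset.sum_add_distrib, Finset.sum_ite_eq, Finset.mem_univ, if_true,
    Finset.sum_sub_distrib, Finset.sum_neg_distrib, ← Finset.mul_sum, ← Finset.sum_mul]
  ring

private lemma sum_eval_aux {d : ℕ} (u v s t F : Fin d → ℂ) (c1 c2 c3 c4 : ℂ)
    (hF : ∀ i, F i = c1 * u i + c2 * v i + c3 * s i + c4 * t i) :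
    ∑ i, F i = c1 * (∑ i, u i) + c2 * (∑ i, v i) + c3 * (∑ i, s i) + c4 * (∑ i, t i) := by
  simp only [hF, Finset.sum_add_distrib, Finset.mul_sum]

/-- The symmetrized outer product of complex vectors. -/
noncomputable def odotC {d : ℕ} (a b : Fin d → ℂ) : Matrix (Fin d) (Fin d) ℂ :=
  fun i j => (a i * b j + b i * a j) / 2

set_option maxHeartbeats 2000000 in
/-- Value of the pointwise Fourier-space minimizer: for
`v̂_* = i((2π)⁻¹|ξ|⁻⁴(ξ·χ̂ξ) − π⁻¹|ξ|⁻²χ̂)ξ` with `χ̂` diagonal, one has the exact identity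
`|2π v̂_* ⊙ (iξ) − χ̂|² = |ξ|⁻⁴|ξ·χ̂ξ|² + |χ̂|² − 2|ξ|⁻²|χ̂ξ|²`. -/
theorem fourier_minimizer_value {d : ℕ} (ξ : Fin d → ℝ) (hξ : ξ ≠ 0)
    (χ : Fin d → ℂ) :
    let q : ℝ := ∑ i, ξ i ^ 2
    let T : ℂ := ∑ i, χ i * (ξ i : ℂ) ^ 2
    let vstar : Fin d → ℂ := fun k =>
      Complex.I * (((2 * Real.pi : ℝ) : ℂ)⁻¹ * ((q : ℂ) ^ 2)⁻¹ * T * (ξ k : ℂ)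
        - ((Real.pi : ℝ) : ℂ)⁻¹ * (q : ℂ)⁻¹ * (χ k * (ξ k : ℂ)))
    (∑ i, ∑ j, ‖(((2 * Real.pi : ℝ) : ℂ)
          * odotC vstar (fun k => Complex.I * (ξ k : ℂ)) i j
        - Matrix.diagonal χ i j)‖ ^ 2)
      = (q ^ 2)⁻¹ * ‖T‖ ^ 2 + (∑ i, ‖χ i‖ ^ 2)
        - 2 * q⁻¹ * ∑ i, ‖χ i‖ ^ 2 * ξ i ^ 2 := by
  intro q T vstar
  have hqdef : q = ∑ i, ξ i ^ 2 := rfl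
  have hTdef : T = ∑ i, χ i * (ξ i : ℂ) ^ 2 := rfl
  have hvdef : vstar = fun k =>
      Complex.I * (((2 * Real.pi : ℝ) : ℂ)⁻¹ * ((q : ℂ) ^ 2)⁻¹ * T * (ξ k : ℂ)
        - ((Real.pi : ℝ) : ℂ)⁻¹ * (q : ℂ)⁻¹ * (χ k * (ξ k : ℂ))) := rfl
  have hq0 : 0 < q := by
    obtain ⟨k, hk⟩ := Function.ne_iff.mp hξ
    rw [hqdef]
    exact Finset.sum_pos' (fun i _ => sq_nonneg _) ⟨k, Finset.mem_univ k, by exact pow_pos (abs_pos.mpr hk) 2 |>.trans_le (le_of_eq (sq_abs _))⟩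
  have hqc : (q : ℂ) ≠ 0 := by exact_mod_cast hq0.ne'
  have hπ : (Real.pi : ℂ) ≠ 0 := by exact_mod_cast Real.pi_ne_zero
  have hM : ∀ i j, (((2 * Real.pi : ℝ) : ℂ) * odotC vstar (fun k => Complex.I * (ξ k : ℂ)) i j - Matrix.diagonal χ i j)
      = (((-(q:ℂ)⁻¹ * (q:ℂ)⁻¹ * T + (q:ℂ)⁻¹ * χ i) * (ξ i:ℂ) * (ξ j:ℂ) + (ξ i:ℂ) * ((q:ℂ)⁻¹ * χ j * (ξ j:ℂ)) - (if i = j then χ i else 0))) := by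
    intro i j
    rw [hvdef]
    simp only [odotC, Matrix.diagonal_apply]
    push_cast
    rcases eq_or_ne i j with h | h
    · subst h
      simp only [if_pos rfl]
      field_simp
      ring_nf
      simp only [Complex.I_sq]
      field_simp
      ring
    · simp only [if_neg h]
      field_simp
      ring_nf
      simp only [Complex.I_sq]
      field_simp
      ring
  have hP : ∑ x, ((ξ x : ℂ) * (ξ x : ℂ)) = (q : ℂ) := by
    rw [hqdef]
    push_cast
    exact Finset.sum_congr rfl fun i _ => by ring
  have hTT : ∑ x, (χ x * ((ξ x : ℂ) * (ξ x : ℂ))) = T := by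
    rw [hTdef]
    exact Finset.sum_congr rfl fun i _ => by ring
  have hUU : ∑ x, ((starRingEnd ℂ) (χ x) * ((ξ x : ℂ) * (ξ x : ℂ)))
      = (starRingEnd ℂ) T := by
    rw [hTdef, map_sum]
    exact Finset.sum_congr rfl fun i _ => by
      simp only [map_mul, map_pow, Complex.conj_ofReal]; ring
  have hSS : ∑ x, (χ x * (starRingEnd ℂ) (χ x) * ((ξ x : ℂ) * (ξ x : ℂ)))
      = ((∑ i, ‖χ i‖ ^ 2 * ξ i ^ 2 : ℝ) : ℂ) := by
    push_cast
    exact Finset.sum_congr rfl fun i _ => by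
      rw [Complex.mul_conj, Complex.normSq_eq_norm_sq]
      push_cast
      ring
  have hCC : ∑ x, (χ x * (starRingEnd ℂ) (χ x))
      = ((∑ i, ‖χ i‖ ^ 2 : ℝ) : ℂ) := by
    push_cast
    exact Finset.sum_congr rfl fun i _ => by
      rw [Complex.mul_conj, Complex.normSq_eq_norm_sq]
      push_cast
      ring
  have key : (∑ i, ∑ j, ((((2 * Real.pi : ℝ) : ℂ) * odotC vstar (fun k => Complex.I * (ξ k : ℂ)) i j - Matrix.diagonal χ i j) * (starRingEnd ℂ) (((2 * Real.pi : ℝ) : ℂ) * odotC vstar (fun k => Complex.I * (ξ k : ℂ)) i j - Matrix.diagonal χ i j)))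
      = (((q ^ 2)⁻¹ * ‖T‖ ^ 2 + (∑ i, ‖χ i‖ ^ 2) - 2 * q⁻¹ * (∑ i, ‖χ i‖ ^ 2 * ξ i ^ 2) : ℝ) : ℂ) := by
    have step1 : (∑ i, ∑ j, ((((2 * Real.pi : ℝ) : ℂ) * odotC vstar (fun k => Complex.I * (ξ k : ℂ)) i j - Matrix.diagonal χ i j) * (starRingEnd ℂ) (((2 * Real.pi : ℝ) : ℂ) * odotC vstar (fun k => Complex.I * (ξ k : ℂ)) i j - Matrix.diagonal χ i j)))
        = ∑ i, ∑ j, ((((-(q:ℂ)⁻¹ * (q:ℂ)⁻¹ * T + (q:ℂ)⁻¹ * χ i) * (ξ i:ℂ) * (ξ j:ℂ) + (ξ i:ℂ) * ((q:ℂ)⁻¹ * χ j * (ξ j:ℂ)) - (if i = j then χ i else 0))) * (starRingEnd ℂ) (((-(q:ℂ)⁻¹ * (q:ℂ)⁻¹ * T + (q:ℂ)⁻¹ * χ i) * (ξ i:ℂ) * (ξ j:ℂ) + (ξ i:ℂ) * ((q:ℂ)⁻¹ * χ j * (ξ j:ℂ)) - (if i = j then χ i else 0)))) :=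
      Finset.sum_congr rfl fun i _ => Finset.sum_congr rfl fun j _ => by rw [hM]
    rw [step1]
    have expand : ∀ x y : ℂ, ∀ z : Prop, ∀ inst : Decidable z, ∀ u : ℂ,
        (starRingEnd ℂ) (x + y - (if z then u else 0))
          = (starRingEnd ℂ) x + (starRingEnd ℂ) y - (if z then (starRingEnd ℂ) u else 0) := by
      intro x y z inst u; split_ifs <;> simp
    have inst := sum_expand_aux (fun k => ((ξ k : ℂ)))
      (fun i => ((-(q:ℂ)⁻¹ * (q:ℂ)⁻¹ * T) + (q:ℂ)⁻¹ * χ i) * (ξ i:ℂ))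
      (fun j => (q:ℂ)⁻¹ * χ j * (ξ j:ℂ)) χ
    simp only [expand, map_mul, map_add, map_neg, Complex.conj_ofReal, map_inv₀] at inst ⊢
    rw [inst]
    rw [sum_eval_aux (fun x => ((ξ x:ℂ) * (ξ x:ℂ))) (fun x => (starRingEnd ℂ) (χ x) * ((ξ x:ℂ) * (ξ x:ℂ)))
        (fun x => χ x * ((ξ x:ℂ) * (ξ x:ℂ))) (fun x => χ x * (starRingEnd ℂ) (χ x) * ((ξ x:ℂ) * (ξ x:ℂ)))
        (fun x => (-(q:ℂ)⁻¹ * (q:ℂ)⁻¹ * T + (q:ℂ)⁻¹ * χ x) * (ξ x:ℂ) * ((-(q:ℂ)⁻¹ * (q:ℂ)⁻¹ * (starRingEnd ℂ) T + (q:ℂ)⁻¹ * (starRingEnd ℂ) (χ x)) * (ξ x:ℂ))) ((-(q:ℂ)⁻¹ * (q:ℂ)⁻¹ * T) * (-(q:ℂ)⁻¹ * (q:ℂ)⁻¹ * (starRingEnd ℂ) T)) ((-(q:ℂ)⁻¹ * (q:ℂ)⁻¹ * T) * (q:ℂ)⁻¹) ((-(q:ℂ)⁻¹ * (q:ℂ)⁻¹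 * (starRingEnd ℂ) T) * (q:ℂ)⁻¹) ((q:ℂ)⁻¹ * (q:ℂ)⁻¹) (fun i => by ring),
      sum_eval_aux (fun x => ((ξ x:ℂ) * (ξ x:ℂ))) (fun x => (starRingEnd ℂ) (χ x) * ((ξ x:ℂ) * (ξ x:ℂ)))
        (fun x => χ x * ((ξ x:ℂ) * (ξ x:ℂ))) (fun x => χ x * (starRingEnd ℂ) (χ x) * ((ξ x:ℂ) * (ξ x:ℂ)))
        (fun x => (-(q:ℂ)⁻¹ * (q:ℂ)⁻¹ * T + (q:ℂ)⁻¹ * χ x) * (ξ x:ℂ) * (ξ x:ℂ)) (-(q:ℂ)⁻¹ * (q:ℂ)⁻¹ * T) 0 ((q:ℂ)⁻¹) 0 (fun i => by ring),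
      sum_eval_aux (fun x => ((ξ x:ℂ) * (ξ x:ℂ))) (fun x => (starRingEnd ℂ) (χ x) * ((ξ x:ℂ) * (ξ x:ℂ)))
        (fun x => χ x * ((ξ x:ℂ) * (ξ x:ℂ))) (fun x => χ x * (starRingEnd ℂ) (χ x) * ((ξ x:ℂ) * (ξ x:ℂ)))
        (fun x => (ξ x:ℂ) * ((q:ℂ)⁻¹ * (starRingEnd ℂ) (χ x) * (ξ x:ℂ))) 0 ((q:ℂ)⁻¹) 0 0 (fun i => by ring),
      sum_eval_aux (fun x => ((ξ x:ℂ) * (ξ x:ℂ))) (fun x => (starRingEnd ℂ) (χ x) * ((ξ x:ℂ) * (ξ x:ℂ)))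
        (fun x => χ x * ((ξ x:ℂ) * (ξ x:ℂ))) (fun x => χ x * (starRingEnd ℂ) (χ x) * ((ξ x:ℂ) * (ξ x:ℂ)))
        (fun x => (ξ x:ℂ) * ((-(q:ℂ)⁻¹ * (q:ℂ)⁻¹ * (starRingEnd ℂ) T + (q:ℂ)⁻¹ * (starRingEnd ℂ) (χ x)) * (ξ x:ℂ))) (-(q:ℂ)⁻¹ * (q:ℂ)⁻¹ * (starRingEnd ℂ) T) ((q:ℂ)⁻¹) 0 0 (fun i => by ring),
      sum_eval_aux (fun x => ((ξ x:ℂ) * (ξ x:ℂ))) (fun x => (starRingEnd ℂ) (χ x) * ((ξ x:ℂ) * (ξ x:ℂ)))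
        (fun x => χ x * ((ξ x:ℂ) * (ξ x:ℂ))) (fun x => χ x * (starRingEnd ℂ) (χ x) * ((ξ x:ℂ) * (ξ x:ℂ)))
        (fun x => (q:ℂ)⁻¹ * χ x * (ξ x:ℂ) * (ξ x:ℂ)) 0 0 ((q:ℂ)⁻¹) 0 (fun i => by ring),
      sum_eval_aux (fun x => ((ξ x:ℂ) * (ξ x:ℂ))) (fun x => (starRingEnd ℂ) (χ x) * ((ξ x:ℂ) * (ξ x:ℂ)))
        (fun x => χ x * ((ξ x:ℂ) * (ξ x:ℂ))) (fun x => χ x * (starRingEnd ℂ) (χ x) * ((ξ x:ℂ) * (ξ x:ℂ)))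
        (fun x => (q:ℂ)⁻¹ * χ x * (ξ x:ℂ) * ((q:ℂ)⁻¹ * (starRingEnd ℂ) (χ x) * (ξ x:ℂ))) 0 0 0 ((q:ℂ)⁻¹ * (q:ℂ)⁻¹) (fun i => by ring),
      sum_eval_aux (fun x => ((ξ x:ℂ) * (ξ x:ℂ))) (fun x => (starRingEnd ℂ) (χ x) * ((ξ x:ℂ) * (ξ x:ℂ)))
        (fun x => χ x * ((ξ x:ℂ) * (ξ x:ℂ))) (fun x => χ x * (starRingEnd ℂ) (χ x) * ((ξ x:ℂ) * (ξ x:ℂ)))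
        (fun x => (-(q:ℂ)⁻¹ * (q:ℂ)⁻¹ * T + (q:ℂ)⁻¹ * χ x) * (ξ x:ℂ) * (ξ x:ℂ) * (starRingEnd ℂ) (χ x)) 0 (-(q:ℂ)⁻¹ * (q:ℂ)⁻¹ * T) 0 ((q:ℂ)⁻¹) (fun i => by ring),
      sum_eval_aux (fun x => ((ξ x:ℂ) * (ξ x:ℂ))) (fun x => (starRingEnd ℂ) (χ x) * ((ξ x:ℂ) * (ξ x:ℂ)))
        (fun x => χ x * ((ξ x:ℂ) * (ξ x:ℂ))) (fun x => χ x * (starRingEnd ℂ) (χ x) * ((ξ x:ℂ) * (ξ x:ℂ)))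
        (fun x => (ξ x:ℂ) * ((q:ℂ)⁻¹ * χ x * (ξ x:ℂ)) * (starRingEnd ℂ) (χ x)) 0 0 0 ((q:ℂ)⁻¹) (fun i => by ring),
      sum_eval_aux (fun x => ((ξ x:ℂ) * (ξ x:ℂ))) (fun x => (starRingEnd ℂ) (χ x) * ((ξ x:ℂ) * (ξ x:ℂ)))
        (fun x => χ x * ((ξ x:ℂ) * (ξ x:ℂ))) (fun x => χ x * (starRingEnd ℂ) (χ x) * ((ξ x:ℂ) * (ξ x:ℂ)))
        (fun x => χ x * ((-(q:ℂ)⁻¹ * (q:ℂ)⁻¹ * (starRingEnd ℂ) T + (q:ℂ)⁻¹ * (starRingEnd ℂ) (χ x)) * (ξ x:ℂ)) * (ξ x:ℂ)) 0 0 (-(q:ℂ)⁻¹ * (q:ℂ)⁻¹ * (starRingEnd ℂ) T) ((q:ℂ)⁻¹) (fun i => by ring),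
      sum_eval_aux (fun x => ((ξ x:ℂ) * (ξ x:ℂ))) (fun x => (starRingEnd ℂ) (χ x) * ((ξ x:ℂ) * (ξ x:ℂ)))
        (fun x => χ x * ((ξ x:ℂ) * (ξ x:ℂ))) (fun x => χ x * (starRingEnd ℂ) (χ x) * ((ξ x:ℂ) * (ξ x:ℂ)))
        (fun x => χ x * (ξ x:ℂ) * ((q:ℂ)⁻¹ * (starRingEnd ℂ) (χ x) * (ξ x:ℂ))) 0 0 0 ((q:ℂ)⁻¹) (fun i => by ring)]
    rw [hP, hTT, hUU, hSS, hCC]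
    have habsT : ((‖T‖ : ℝ) : ℂ) ^ 2 = T * (starRingEnd ℂ) T := by
      rw [← Complex.ofReal_pow, Complex.mul_conj, Complex.normSq_eq_norm_sq]
    have hRHS : (((q ^ 2)⁻¹ * ‖T‖ ^ 2 + (∑ i, ‖χ i‖ ^ 2) - 2 * q⁻¹ * (∑ i, ‖χ i‖ ^ 2 * ξ i ^ 2) : ℝ) : ℂ) = (q:ℂ)⁻¹ * (q:ℂ)⁻¹ * (T * (starRingEnd ℂ) T)
        + ((∑ i, ‖χ i‖ ^ 2 : ℝ) : ℂ)
        - 2 * (q:ℂ)⁻¹ * ((∑ i, ‖χ i‖ ^ 2 * ξ i ^ 2 : ℝ) : ℂ) := by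
      push_cast
      rw [habsT]
      ring
    rw [hRHS]
    linear_combination (2 * (q:ℂ)⁻¹ * ((∑ i, ‖χ i‖ ^ 2 * ξ i ^ 2 : ℝ) : ℂ)
      - 3 * (q:ℂ)⁻¹ ^ 2 * (T * (starRingEnd ℂ) T)
      + (q:ℂ) * (q:ℂ)⁻¹ ^ 3 * (T * (starRingEnd ℂ) T)) * (mul_inv_cancel₀ hqc)
  have habs : ∀ z : ℂ, ‖z‖ ^ 2 = (z * (starRingEnd ℂ) z).re := by
    intro z
    rw [Complex.mul_conj, Complex.ofReal_re, Complex.sq_norm]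
  calc (∑ i, ∑ j, ‖(((2 * Real.pi : ℝ) : ℂ) * odotC vstar (fun k => Complex.I * (ξ k : ℂ)) i j - Matrix.diagonal χ i j)‖ ^ 2)
      = ∑ i, ∑ j, ((((2 * Real.pi : ℝ) : ℂ) * odotC vstar (fun k => Complex.I * (ξ k : ℂ)) i j - Matrix.diagonal χ i j) * (starRingEnd ℂ) (((2 * Real.pi : ℝ) : ℂ) * odotC vstar (fun k => Complex.I * (ξ k : ℂ)) i j - Matrix.diagonal χ i j)).re :=
        Finset.sum_congr rfl fun i _ => Finset.sum_congr rfl fun j _ => habs _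
    _ = (∑ i, ∑ j, ((((2 * Real.pi : ℝ) : ℂ) * odotC vstar (fun k => Complex.I * (ξ k : ℂ)) i j - Matrix.diagonal χ i j) * (starRingEnd ℂ) (((2 * Real.pi : ℝ) : ℂ) * odotC vstar (fun k => Complex.I * (ξ k : ℂ)) i j - Matrix.diagonal χ i j))).re := by
        rw [Complex.re_sum]
        exact Finset.sum_congr rfl fun i _ => (Complex.re_sum _ _).symm
    _ = ((((q ^ 2)⁻¹ * ‖T‖ ^ 2 + (∑ i, ‖χ i‖ ^ 2) - 2 * q⁻¹ * (∑ i, ‖χ i‖ ^ 2 * ξ i ^ 2) : ℝ) : ℂ)).re := by rw [key]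
    _ = _ := by rw [Complex.ofReal_re]
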